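/- arXiv:2205.13059 — 2 statements merged into one kernel-verified Lean document; each statement's English description precedes it below -/
import Mathlib

section
/- Let Γ₁ and Γ₂ be locally compact Hausdorff topological spaces, let φᵢ be a flow on Γᵢ, and let (Mᵢ,Nᵢ) be an index pair for an isolated invariant set Sᵢ of φᵢ, with Nᵢ nonempty (i = 1,2). Then S₁ × S₂ is an isolated invariant set for the product flow ((x₁,x₂),t) ↦ (φ₁(x₁,t), φ₂(x₂,t)) on Γ₁ × Γ₂, the pair (M₁ × M₂, (M₁ × N₂) ∪ (N₁ × M₂)) is an index pair for S₁ × S₂ with respect to the product flow, and the pointed quotient (M₁ × M₂)/((M₁ × N₂) ∪ (N₁ × M₂)) is pointed homeomorphic to the smash product (M₁/N₁) ∧ (M₂/N₂). -/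
open Set

/-- A (continuous) flow on a topological space `Γ`. -/
def IsFlow {Γ : Type*} [TopologicalSpace Γ] (φ : Γ × ℝ → Γ) : Prop :=
  Continuous φ ∧ (∀ x, φ (x, 0) = x) ∧ ∀ (x : Γ) (s t : ℝ), φ (φ (x, s), t) = φ (x, s + t)

/-- The maximal invariant subset of `U`. -/
def maxInv {Γ : Type*} (φ : Γ × ℝ → Γ) (U : Set Γ) : Set Γ :=
  {u | u ∈ U ∧ ∀ t : ℝ, φ (u, t) ∈ U}

/-- `U` is a compact (isolating) neighbourhood of `S` with `Inv U = S`. -/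
def IsIsolatingNbhd {Γ : Type*} [TopologicalSpace Γ] (φ : Γ × ℝ → Γ) (U S : Set Γ) : Prop :=
  IsCompact U ∧ U ∈ nhdsSet S ∧ maxInv φ U = S

/-- `S` is an isolated invariant set of the flow `φ`. -/
def IsIsolatedInvariantSet {Γ : Type*} [TopologicalSpace Γ] (φ : Γ × ℝ → Γ) (S : Set Γ) : Prop :=
  IsCompact S ∧ ∃ U : Set Γ, IsIsolatingNbhd φ U S

/-- `(M, N)` is an index pair for the isolated invariant set `S`. -/
def IsIndexPair {Γ : Type*} [TopologicalSpace Γ] (φ : Γ × ℝ → Γ) (S M N : Set Γ) : Prop :=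
  IsCompact M ∧ IsCompact N ∧ N ⊆ M ∧
  IsIsolatingNbhd φ (closure (M \ N)) S ∧
  (∀ x ∈ N, ∀ t : ℝ, 0 ≤ t →
    (∀ s ∈ Icc (0 : ℝ) t, φ (x, s) ∈ M) → ∀ s ∈ Icc (0 : ℝ) t, φ (x, s) ∈ N) ∧
  (∀ x ∈ M, ∀ t : ℝ, 0 ≤ t → φ (x, t) ∉ M → ∃ s ∈ Icc (0 : ℝ) t, φ (x, s) ∈ N)

/-- The relation on `X` collapsing the subset `A` to a point. -/
def collapseRel {X : Type*} (A : Set X) : X → X → Prop :=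
  fun a b => (a ∈ A ∧ b ∈ A) ∨ a = b

/-- The quotient of `X` collapsing the subset `A` to a single point. -/
abbrev Collapse (X : Type*) (A : Set X) : Type _ :=
  Quot (collapseRel A)

/-- The pointed space `M/N`: the quotient of (the subspace) `M` collapsing `N` to a point. -/
abbrev IndexQuot {Γ : Type*} [TopologicalSpace Γ] (M N : Set Γ) : Type _ :=
  Collapse (↥M) {x : ↥M | (x : Γ) ∈ N}

/-- The basepoint of `M/N` (the class of the collapsed set `N`). -/
noncomputable def IndexQuot.pt {Γ : Type*} [TopologicalSpace Γ] {M N : Set Γ}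
    (hMN : N ⊆ M) (hN : N.Nonempty) : IndexQuot M N :=
  Quot.mk _ (⟨hN.choose, hMN hN.choose_spec⟩ : ↥M)

/-- The smash product `X ∧ Y` of two pointed spaces: the quotient of `X × Y` collapsing
`(X × {y₀}) ∪ ({x₀} × Y)` to the basepoint. -/
abbrev SmashQuot {X Y : Type*} [TopologicalSpace X] [TopologicalSpace Y]
    (x₀ : X) (y₀ : Y) : Type _ :=
  Collapse (X × Y) ({p : X × Y | p.1 = x₀} ∪ {p : X × Y | p.2 = y₀})

/-- The basepoint of the smash product. -/
def SmashQuot.pt {X Y : Type*} [TopologicalSpace X] [TopologicalSpace Y]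
    (x₀ : X) (y₀ : Y) : SmashQuot x₀ y₀ :=
  Quot.mk _ (x₀, y₀)

/-- The product of two flows. -/
def prodFlow {Γ₁ Γ₂ : Type*} (φ₁ : Γ₁ × ℝ → Γ₁) (φ₂ : Γ₂ × ℝ → Γ₂) :
    (Γ₁ × Γ₂) × ℝ → Γ₁ × Γ₂ :=
  fun p => (φ₁ (p.1.1, p.2), φ₂ (p.1.2, p.2))

/-! ### Auxiliary topology lemmas -/

lemma collapseRel_equivalence {X : Type*} (A : Set X) : Equivalence (collapseRel A) := by
  constructor
  · intro a; exact Or.inr rfl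
  · rintro a b (⟨h1, h2⟩ | rfl)
    exacts [Or.inl ⟨h2, h1⟩, Or.inr rfl]
  · rintro a b c (⟨h1, h2⟩ | rfl) (⟨h3, h4⟩ | rfl)
    exacts [Or.inl ⟨h1, h4⟩, Or.inl ⟨h1, h2⟩, Or.inl ⟨h3, h4⟩, Or.inr rfl]

lemma collapse_mk_eq {X : Type*} {A : Set X} {a b : X} :
    Quot.mk (collapseRel A) a = Quot.mk (collapseRel A) b ↔ collapseRel A a b := by
  constructor
  · intro h
    exact (collapseRel_equivalence A).eqvGen_iff.mp (Quot.eqvGen_exact h)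
  · exact Quot.sound

lemma isOpen_collapse_image {X : Type*} [TopologicalSpace X] {A U : Set X} (hU : IsOpen U)
    (h : A ⊆ U ∨ Disjoint A U) : IsOpen (Quot.mk (collapseRel A) '' U) := by
  rw [← (isQuotientMap_quot_mk (r := collapseRel A)).isOpen_preimage]
  have : Quot.mk (collapseRel A) ⁻¹' (Quot.mk (collapseRel A) '' U) = U := by
    apply Subset.antisymm
    · rintro z ⟨u, hu, huz⟩
      rcases collapse_mk_eq.mp huz with ⟨hu', hz⟩ | rfl
      · rcases h with h | h
        · exact h hz
        · exact absurd hu (Set.disjoint_left.mp h hu')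
      · exact hu
    · exact subset_preimage_image _ _
  rwa [this]

lemma collapse_sep {X : Type*} [TopologicalSpace X] [NormalSpace X] [T1Space X] {A : Set X}
    (hA : IsClosed A) {x y : X} (hxy : x ≠ y) (hy : y ∉ A) :
    ∃ u v : Set (Collapse X A), IsOpen u ∧ IsOpen v ∧
      Quot.mk _ x ∈ u ∧ Quot.mk _ y ∈ v ∧ Disjoint u v := by
  obtain ⟨U, V, hU, hV, hsU, htV, hUV⟩ :=
    normal_separation (s := A ∪ {x}) (t := {y}) (hA.union isClosed_singleton)
      isClosed_singleton (by
        rw [Set.disjoint_left]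
        rintro z (hz | rfl) rfl
        exacts [hy hz, hxy rfl])
  have hAU : A ⊆ U := (subset_union_left).trans hsU
  refine ⟨Quot.mk _ '' U, Quot.mk _ '' V,
    isOpen_collapse_image hU (Or.inl hAU),
    isOpen_collapse_image hV (Or.inr (Set.disjoint_left.mpr fun z hz hzV =>
      Set.disjoint_left.mp hUV (hAU hz) hzV)),
    ⟨x, hsU (Or.inr rfl), rfl⟩, ⟨y, htV rfl, rfl⟩, ?_⟩
  rw [Set.disjoint_left]
  rintro z ⟨u, hu, rfl⟩ ⟨v, hv, hvu⟩
  rcases collapse_mk_eq.mp hvu with ⟨hv', hu'⟩ | rfl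
  · exact Set.disjoint_left.mp hUV (hAU hv') hv
  · exact Set.disjoint_left.mp hUV hu hv

lemma collapse_t2 {X : Type*} [TopologicalSpace X] [NormalSpace X] [T1Space X] {A : Set X}
    (hA : IsClosed A) : T2Space (Collapse X A) := by
  constructor
  intro a b hab
  obtain ⟨x, rfl⟩ := Quot.exists_rep a
  obtain ⟨y, rfl⟩ := Quot.exists_rep b
  have hrel : ¬ collapseRel A x y := fun h => hab (Quot.sound h)
  have hxy : x ≠ y := fun h => hrel (Or.inr h)
  by_cases hy : y ∈ A
  · have hx : x ∉ A := fun hx => hrel (Or.inl ⟨hx, hy⟩)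
    obtain ⟨u, v, hu, hv, hyu, hxv, huv⟩ := collapse_sep hA hxy.symm hx
    exact ⟨v, u, hv, hu, hxv, hyu, huv.symm⟩
  · obtain ⟨u, v, hu, hv, hxu, hyv, huv⟩ := collapse_sep hA hxy hy
    exact ⟨u, v, hu, hv, hxu, hyv, huv⟩

/-! ### Dynamics lemmas -/

lemma maxInv_prod {Γ₁ Γ₂ : Type*} (φ₁ : Γ₁ × ℝ → Γ₁) (φ₂ : Γ₂ × ℝ → Γ₂)
    (U₁ : Set Γ₁) (U₂ : Set Γ₂) :
    maxInv (prodFlow φ₁ φ₂) (U₁ ×ˢ U₂) = maxInv φ₁ U₁ ×ˢ maxInv φ₂ U₂ := by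
  ext ⟨x₁, x₂⟩
  constructor
  · rintro ⟨⟨h1, h2⟩, h⟩
    exact ⟨⟨h1, fun t => (h t).1⟩, ⟨h2, fun t => (h t).2⟩⟩
  · rintro ⟨⟨h1, h1'⟩, h2, h2'⟩
    exact ⟨⟨h1, h2⟩, fun t => ⟨h1' t, h2' t⟩⟩

lemma prod_mem_nhdsSet {Γ₁ Γ₂ : Type*} [TopologicalSpace Γ₁] [TopologicalSpace Γ₂]
    {U₁ S₁ : Set Γ₁} {U₂ S₂ : Set Γ₂} (h1 : U₁ ∈ nhdsSet S₁) (h2 : U₂ ∈ nhdsSet S₂) :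
    U₁ ×ˢ U₂ ∈ nhdsSet (S₁ ×ˢ S₂) := by
  rw [mem_nhdsSet_iff_forall] at h1 h2 ⊢
  rintro ⟨x₁, x₂⟩ ⟨hx₁, hx₂⟩
  exact prod_mem_nhds (h1 x₁ hx₁) (h2 x₂ hx₂)

lemma isolating_prod {Γ₁ Γ₂ : Type*} [TopologicalSpace Γ₁] [TopologicalSpace Γ₂]
    {φ₁ : Γ₁ × ℝ → Γ₁} {φ₂ : Γ₂ × ℝ → Γ₂} {U₁ S₁ : Set Γ₁} {U₂ S₂ : Set Γ₂}
    (h1 : IsIsolatingNbhd φ₁ U₁ S₁) (h2 : IsIsolatingNbhd φ₂ U₂ S₂) :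
    IsIsolatingNbhd (prodFlow φ₁ φ₂) (U₁ ×ˢ U₂) (S₁ ×ˢ S₂) :=
  ⟨h1.1.prod h2.1, prod_mem_nhdsSet h1.2.1 h2.2.1, by
    rw [maxInv_prod, h1.2.2, h2.2.2]⟩

lemma diff_prod_union {Γ₁ Γ₂ : Type*} (M₁ N₁ : Set Γ₁) (M₂ N₂ : Set Γ₂) :
    (M₁ ×ˢ M₂) \ ((M₁ ×ˢ N₂) ∪ (N₁ ×ˢ M₂)) = (M₁ \ N₁) ×ˢ (M₂ \ N₂) := by
  ext ⟨x₁, x₂⟩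
  simp only [mem_diff, mem_prod, mem_union]
  tauto

lemma exit_prod {Γ₁ Γ₂ : Type*} [TopologicalSpace Γ₁] [T2Space Γ₁]
    [TopologicalSpace Γ₂] [T2Space Γ₂]
    {φ₁ : Γ₁ × ℝ → Γ₁} {φ₂ : Γ₂ × ℝ → Γ₂} (hφ₁ : IsFlow φ₁) (hφ₂ : IsFlow φ₂)
    {M₁ N₁ : Set Γ₁} {M₂ N₂ : Set Γ₂} (hM₁ : IsCompact M₁) (hM₂ : IsCompact M₂)
    (hN₁ : IsClosed N₁) (hN₂ : IsClosed N₂)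
    (hexit₁ : ∀ x ∈ M₁, ∀ t : ℝ, 0 ≤ t → φ₁ (x, t) ∉ M₁ → ∃ s ∈ Icc (0:ℝ) t, φ₁ (x, s) ∈ N₁)
    (hexit₂ : ∀ x ∈ M₂, ∀ t : ℝ, 0 ≤ t → φ₂ (x, t) ∉ M₂ → ∃ s ∈ Icc (0:ℝ) t, φ₂ (x, s) ∈ N₂) :
    ∀ x ∈ M₁ ×ˢ M₂, ∀ t : ℝ, 0 ≤ t → prodFlow φ₁ φ₂ (x, t) ∉ M₁ ×ˢ M₂ →
      ∃ s ∈ Icc (0:ℝ) t, prodFlow φ₁ φ₂ (x, s) ∈ (M₁ ×ˢ N₂) ∪ (N₁ ×ˢ M₂) := by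
  rintro ⟨x₁, x₂⟩ hx t ht hout
  have hMc : IsClosed (M₁ ×ˢ M₂ : Set (Γ₁ × Γ₂)) := (hM₁.prod hM₂).isClosed
  set Φ : ℝ → Γ₁ × Γ₂ := fun s => prodFlow φ₁ φ₂ ((x₁, x₂), s) with hΦdef
  have hΦc : Continuous Φ :=
    (hφ₁.1.comp (continuous_const.prodMk continuous_id)).prodMk
      (hφ₂.1.comp (continuous_const.prodMk continuous_id))
  have hΦ0 : Φ 0 = (x₁, x₂) := by
    show (φ₁ (x₁, 0), φ₂ (x₂, 0)) = (x₁, x₂)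
    rw [hφ₁.2.1, hφ₂.2.1]
  set T : Set ℝ := {s | s ∈ Icc 0 t ∧ ∀ u ∈ Icc (0:ℝ) s, Φ u ∈ M₁ ×ˢ M₂} with hTdef
  have hT0 : (0:ℝ) ∈ T := ⟨⟨le_refl 0, ht⟩, fun u hu => by
    have hu0 : u = 0 := le_antisymm hu.2 hu.1
    rw [hu0, hΦ0]; exact hx⟩
  have hTbdd : BddAbove T := ⟨t, fun s hs => hs.1.2⟩
  set σ := sSup T with hσdef
  have hσ0 : 0 ≤ σ := le_csSup hTbdd hT0
  have hσt : σ ≤ t := csSup_le ⟨0, hT0⟩ fun s hs => hs.1.2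
  have hmem : ∀ u, 0 ≤ u → u < σ → Φ u ∈ M₁ ×ˢ M₂ := by
    intro u hu0 huσ
    obtain ⟨s, hsT, hus⟩ := exists_lt_of_lt_csSup ⟨0, hT0⟩ huσ
    exact hsT.2 u ⟨hu0, hus.le⟩
  have hσmem : Φ σ ∈ M₁ ×ˢ M₂ := by
    rcases eq_or_lt_of_le hσ0 with h | h
    · rw [← h, hΦ0]; exact hx
    · have hC : IsClosed {s : ℝ | Φ s ∈ M₁ ×ˢ M₂} := hMc.preimage hΦc
      have hsub' : Ico (0:ℝ) σ ⊆ {s | Φ s ∈ M₁ ×ˢ M₂} := fun u hu => hmem u hu.1 hu.2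
      have hcl : σ ∈ closure (Ico (0:ℝ) σ) := by
        rw [closure_Ico h.ne]; exact ⟨hσ0, le_refl σ⟩
      have := closure_mono hsub' hcl
      rwa [hC.closure_eq] at this
  have hσT : σ ∈ T := ⟨⟨hσ0, hσt⟩, fun u hu =>
    hu.2.lt_or_eq.elim (fun h => hmem u hu.1 h) (fun h => h ▸ hσmem)⟩
  have hσlt : σ < t := by
    rcases lt_or_eq_of_le hσt with h | h
    · exact h
    · exact absurd (h ▸ hσmem) hout
  have hy : (φ₁ (x₁, σ), φ₂ (x₂, σ)) ∈ M₁ ×ˢ M₂ := hσmem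
  have key : φ₁ (x₁, σ) ∈ N₁ ∨ φ₂ (x₂, σ) ∈ N₂ := by
    by_contra hk
    push_neg at hk
    have hW : {s : ℝ | φ₁ (φ₁ (x₁, σ), s) ∉ N₁} ∩ {s | φ₂ (φ₂ (x₂, σ), s) ∉ N₂}
        ∈ nhds (0:ℝ) := by
      apply Filter.inter_mem
      · refine (hN₁.isOpen_compl.preimage
          (hφ₁.1.comp (continuous_const.prodMk continuous_id))).mem_nhds ?_
        show φ₁ (φ₁ (x₁, σ), 0) ∉ N₁
        rw [hφ₁.2.1]; exact hk.1
      · refine (hN₂.isOpen_compl.preimage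
          (hφ₂.1.comp (continuous_const.prodMk continuous_id))).mem_nhds ?_
        show φ₂ (φ₂ (x₂, σ), 0) ∉ N₂
        rw [hφ₂.2.1]; exact hk.2
    obtain ⟨ε, hε, hball⟩ := Metric.mem_nhds_iff.mp hW
    have hσσ' : σ < min (σ + ε/2) t := lt_min (by linarith) hσlt
    have hσ'T : min (σ + ε/2) t ∈ T := by
      refine ⟨⟨le_trans hσ0 hσσ'.le, min_le_right _ _⟩, ?_⟩
      intro u hu
      rcases le_or_gt u σ with h | h
      · exact hσT.2 u ⟨hu.1, h⟩
      · have hus : u - σ ∈ Icc (0:ℝ) (ε/2) := by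
          constructor
          · linarith
          · have := le_trans hu.2 (min_le_left _ _); linarith
        constructor
        · by_contra hM
          have h1 : φ₁ (φ₁ (x₁, σ), u - σ) ∉ M₁ := by
            have heq : σ + (u - σ) = u := by ring
            rw [hφ₁.2.2, heq]; exact hM
          obtain ⟨s, hs, hsN⟩ := hexit₁ _ hy.1 (u - σ) hus.1 h1
          have hsball : s ∈ Metric.ball (0:ℝ) ε := by
            rw [Metric.mem_ball, Real.dist_eq, sub_zero, abs_of_nonneg hs.1]
            have := le_trans hs.2 hus.2
            linarith
          exact (hball hsball).1 hsN
        · by_contra hM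
          have h1 : φ₂ (φ₂ (x₂, σ), u - σ) ∉ M₂ := by
            have heq : σ + (u - σ) = u := by ring
            rw [hφ₂.2.2, heq]; exact hM
          obtain ⟨s, hs, hsN⟩ := hexit₂ _ hy.2 (u - σ) hus.1 h1
          have hsball : s ∈ Metric.ball (0:ℝ) ε := by
            rw [Metric.mem_ball, Real.dist_eq, sub_zero, abs_of_nonneg hs.1]
            have := le_trans hs.2 hus.2
            linarith
          exact (hball hsball).2 hsN
    have : min (σ + ε/2) t ≤ σ := le_csSup hTbdd hσ'T
    exact absurd this (not_le.mpr hσσ')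
  refine ⟨σ, ⟨hσ0, hσt⟩, ?_⟩
  rcases key with h | h
  · exact Or.inr ⟨h, hy.2⟩
  · exact Or.inl ⟨hy.1, h⟩

section SmashSection

variable {Γ₁ Γ₂ : Type*} [TopologicalSpace Γ₁] [TopologicalSpace Γ₂]
  {M₁ N₁ : Set Γ₁} {M₂ N₂ : Set Γ₂}

noncomputable def smashWedge (hMN₁ : N₁ ⊆ M₁) (hN₁ : N₁.Nonempty)
    (hMN₂ : N₂ ⊆ M₂) (hN₂ : N₂.Nonempty) : Set (IndexQuot M₁ N₁ × IndexQuot M₂ N₂) :=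
  {p | p.1 = IndexQuot.pt hMN₁ hN₁} ∪ {p | p.2 = IndexQuot.pt hMN₂ hN₂}

lemma mem_smashWedge (hMN₁ : N₁ ⊆ M₁) (hN₁ : N₁.Nonempty)
    (hMN₂ : N₂ ⊆ M₂) (hN₂ : N₂.Nonempty) (a : ↥(M₁ ×ˢ M₂ : Set (Γ₁ × Γ₂)))
    (ha : (a : Γ₁ × Γ₂) ∈ (M₁ ×ˢ N₂) ∪ (N₁ ×ˢ M₂)) :
    ((Quot.mk _ ⟨(a : Γ₁ × Γ₂).1, a.2.1⟩ : IndexQuot M₁ N₁),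
      (Quot.mk _ ⟨(a : Γ₁ × Γ₂).2, a.2.2⟩ : IndexQuot M₂ N₂)) ∈
      smashWedge hMN₁ hN₁ hMN₂ hN₂ := by
  rcases ha with ⟨-, h2⟩ | ⟨h1, -⟩
  · exact Or.inr (Quot.sound (Or.inl ⟨h2, hN₂.choose_spec⟩))
  · exact Or.inl (Quot.sound (Or.inl ⟨h1, hN₁.choose_spec⟩))

noncomputable def smashF (hMN₁ : N₁ ⊆ M₁) (hN₁ : N₁.Nonempty)
    (hMN₂ : N₂ ⊆ M₂) (hN₂ : N₂.Nonempty) :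
    IndexQuot (M₁ ×ˢ M₂) ((M₁ ×ˢ N₂) ∪ (N₁ ×ˢ M₂)) →
      SmashQuot (IndexQuot.pt hMN₁ hN₁) (IndexQuot.pt hMN₂ hN₂) :=
  Quot.lift (fun x => Quot.mk _
      ((Quot.mk _ ⟨(x : Γ₁ × Γ₂).1, x.2.1⟩ : IndexQuot M₁ N₁),
       (Quot.mk _ ⟨(x : Γ₁ × Γ₂).2, x.2.2⟩ : IndexQuot M₂ N₂))) (by
    rintro a b (⟨ha, hb⟩ | rfl)
    · exact Quot.sound (Or.inl ⟨mem_smashWedge hMN₁ hN₁ hMN₂ hN₂ a ha,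
        mem_smashWedge hMN₁ hN₁ hMN₂ hN₂ b hb⟩)
    · rfl)

noncomputable def smashG2 (a : ↥M₁) :
    IndexQuot M₂ N₂ → IndexQuot (M₁ ×ˢ M₂) ((M₁ ×ˢ N₂) ∪ (N₁ ×ˢ M₂)) :=
  Quot.lift
    (fun b => Quot.mk _
      (⟨((a : Γ₁), (b : Γ₂)), ⟨a.2, b.2⟩⟩ : ↥(M₁ ×ˢ M₂ : Set (Γ₁ × Γ₂)))) (by
    rintro b b' (⟨hb, hb'⟩ | rfl)
    · exact Quot.sound (Or.inl ⟨Or.inl ⟨a.2, hb⟩, Or.inl ⟨a.2, hb'⟩⟩)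
    · rfl)

noncomputable def smashG1 :
    IndexQuot M₁ N₁ → IndexQuot M₂ N₂ →
      IndexQuot (M₁ ×ˢ M₂) ((M₁ ×ˢ N₂) ∪ (N₁ ×ˢ M₂)) :=
  Quot.lift smashG2 (by
    rintro a a' (⟨ha, ha'⟩ | rfl)
    · funext q
      induction q using Quot.ind with
      | _ b => exact Quot.sound (Or.inl ⟨Or.inr ⟨ha, b.2⟩, Or.inr ⟨ha', b.2⟩⟩)
    · rfl)

lemma smashG1_base (hMN₁ : N₁ ⊆ M₁) (hN₁ : N₁.Nonempty)
    (hMN₂ : N₂ ⊆ M₂) (hN₂ : N₂.Nonempty)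
    (hsub : ((M₁ ×ˢ N₂) ∪ (N₁ ×ˢ M₂) : Set (Γ₁ × Γ₂)) ⊆ M₁ ×ˢ M₂)
    (hne : ((M₁ ×ˢ N₂) ∪ (N₁ ×ˢ M₂) : Set (Γ₁ × Γ₂)).Nonempty) :
    ∀ p ∈ smashWedge hMN₁ hN₁ hMN₂ hN₂,
      smashG1 p.1 p.2 = (Quot.mk _ (⟨hne.choose, hsub hne.choose_spec⟩ :
        ↥(M₁ ×ˢ M₂ : Set (Γ₁ × Γ₂))) :
        IndexQuot (M₁ ×ˢ M₂) ((M₁ ×ˢ N₂) ∪ (N₁ ×ˢ M₂))) := by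
  rintro ⟨q1, q2⟩ hp
  induction q1 using Quot.ind with
  | _ a =>
  induction q2 using Quot.ind with
  | _ b =>
  rcases hp with h | h
  · have ha : (a : Γ₁) ∈ N₁ := by
      rcases collapse_mk_eq.mp h with ⟨h1, -⟩ | h1
      · exact h1
      · rw [h1]; exact hN₁.choose_spec
    exact Quot.sound (Or.inl ⟨Or.inr ⟨ha, b.2⟩, hne.choose_spec⟩)
  · have hb : (b : Γ₂) ∈ N₂ := by
      rcases collapse_mk_eq.mp h with ⟨h1, -⟩ | h1
      · exact h1
      · rw [h1]; exact hN₂.choose_spec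
    exact Quot.sound (Or.inl ⟨Or.inl ⟨a.2, hb⟩, hne.choose_spec⟩)

noncomputable def smashG (hMN₁ : N₁ ⊆ M₁) (hN₁ : N₁.Nonempty)
    (hMN₂ : N₂ ⊆ M₂) (hN₂ : N₂.Nonempty)
    (hsub : ((M₁ ×ˢ N₂) ∪ (N₁ ×ˢ M₂) : Set (Γ₁ × Γ₂)) ⊆ M₁ ×ˢ M₂)
    (hne : ((M₁ ×ˢ N₂) ∪ (N₁ ×ˢ M₂) : Set (Γ₁ × Γ₂)).Nonempty) :
    SmashQuot (IndexQuot.pt hMN₁ hN₁) (IndexQuot.pt hMN₂ hN₂) →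
      IndexQuot (M₁ ×ˢ M₂) ((M₁ ×ˢ N₂) ∪ (N₁ ×ˢ M₂)) :=
  Quot.lift (fun p => smashG1 p.1 p.2) (by
    rintro p p' (⟨hp, hp'⟩ | rfl)
    · show smashG1 p.1 p.2 = smashG1 p'.1 p'.2
      rw [smashG1_base hMN₁ hN₁ hMN₂ hN₂ hsub hne p hp,
        smashG1_base hMN₁ hN₁ hMN₂ hN₂ hsub hne p' hp']
    · rfl)

noncomputable def smashEquiv (hMN₁ : N₁ ⊆ M₁) (hN₁ : N₁.Nonempty)
    (hMN₂ : N₂ ⊆ M₂) (hN₂ : N₂.Nonempty)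
    (hsub : ((M₁ ×ˢ N₂) ∪ (N₁ ×ˢ M₂) : Set (Γ₁ × Γ₂)) ⊆ M₁ ×ˢ M₂)
    (hne : ((M₁ ×ˢ N₂) ∪ (N₁ ×ˢ M₂) : Set (Γ₁ × Γ₂)).Nonempty) :
    IndexQuot (M₁ ×ˢ M₂) ((M₁ ×ˢ N₂) ∪ (N₁ ×ˢ M₂)) ≃
      SmashQuot (IndexQuot.pt hMN₁ hN₁) (IndexQuot.pt hMN₂ hN₂) where
  toFun := smashF hMN₁ hN₁ hMN₂ hN₂
  invFun := smashG hMN₁ hN₁ hMN₂ hN₂ hsub hne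
  left_inv := by
    intro z
    induction z using Quot.ind with
    | _ x => rfl
  right_inv := by
    intro w
    induction w using Quot.ind with
    | _ p =>
    obtain ⟨q1, q2⟩ := p
    induction q1 using Quot.ind with
    | _ a =>
    induction q2 using Quot.ind with
    | _ b => rfl

lemma smash_equiv {Γ₁ Γ₂ : Type*} [TopologicalSpace Γ₁] [T2Space Γ₁]
    [TopologicalSpace Γ₂] [T2Space Γ₂]
    {M₁ N₁ : Set Γ₁} {M₂ N₂ : Set Γ₂}
    (hM₁ : IsCompact M₁) (hM₂ : IsCompact M₂) (hN₁c : IsClosed N₁) (hN₂c : IsClosed N₂)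
    (hMN₁ : N₁ ⊆ M₁) (hMN₂ : N₂ ⊆ M₂) (hN₁ : N₁.Nonempty) (hN₂ : N₂.Nonempty)
    (hsub : ((M₁ ×ˢ N₂) ∪ (N₁ ×ˢ M₂) : Set (Γ₁ × Γ₂)) ⊆ M₁ ×ˢ M₂)
    (hne : ((M₁ ×ˢ N₂) ∪ (N₁ ×ˢ M₂) : Set (Γ₁ × Γ₂)).Nonempty) :
    ∃ e : IndexQuot (M₁ ×ˢ M₂) ((M₁ ×ˢ N₂) ∪ (N₁ ×ˢ M₂)) ≃ₜ
        SmashQuot (IndexQuot.pt hMN₁ hN₁) (IndexQuot.pt hMN₂ hN₂),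
      e (IndexQuot.pt hsub hne) =
        SmashQuot.pt (IndexQuot.pt hMN₁ hN₁) (IndexQuot.pt hMN₂ hN₂) := by
  have hFc : Continuous (smashF hMN₁ hN₁ hMN₂ hN₂) := by
    apply continuous_quot_lift
    exact continuous_quot_mk.comp
      ((continuous_quot_mk.comp
        (((continuous_fst.comp continuous_subtype_val)).subtype_mk _)).prodMk
       (continuous_quot_mk.comp
        (((continuous_snd.comp continuous_subtype_val)).subtype_mk _)))

  haveI : CompactSpace ↥(M₁ ×ˢ M₂ : Set (Γ₁ × Γ₂)) :=
    isCompact_iff_compactSpace.mp (hM₁.prod hM₂)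
  haveI : CompactSpace ↥M₁ := isCompact_iff_compactSpace.mp hM₁
  haveI : CompactSpace ↥M₂ := isCompact_iff_compactSpace.mp hM₂
  haveI : T2Space (IndexQuot M₁ N₁) :=
    collapse_t2 (hN₁c.preimage continuous_subtype_val)
  haveI : T2Space (IndexQuot M₂ N₂) :=
    collapse_t2 (hN₂c.preimage continuous_subtype_val)
  have hwclosed : IsClosed ({p | p.1 = IndexQuot.pt hMN₁ hN₁} ∪
      {p | p.2 = IndexQuot.pt hMN₂ hN₂} :
      Set (IndexQuot M₁ N₁ × IndexQuot M₂ N₂)) :=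
    ((isClosed_singleton (x := IndexQuot.pt hMN₁ hN₁)).preimage continuous_fst).union
      ((isClosed_singleton (x := IndexQuot.pt hMN₂ hN₂)).preimage continuous_snd)
  haveI : T2Space (SmashQuot (IndexQuot.pt hMN₁ hN₁) (IndexQuot.pt hMN₂ hN₂)) :=
    collapse_t2 hwclosed
  refine ⟨Continuous.homeoOfEquivCompactToT2
    (f := smashEquiv hMN₁ hN₁ hMN₂ hN₂ hsub hne) (by exact hFc), ?_⟩
  show smashF hMN₁ hN₁ hMN₂ hN₂ (IndexQuot.pt hsub hne) = _
  exact Quot.sound (Or.inl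
    ⟨mem_smashWedge hMN₁ hN₁ hMN₂ hN₂ _ hne.choose_spec, Or.inl rfl⟩)

end SmashSection

/-- **Conley index of a product flow**: given index pairs `(Mᵢ, Nᵢ)` for isolated invariant
sets `Sᵢ` of flows `φᵢ`, the set `S₁ × S₂` is an isolated invariant set of the product flow,
`(M₁ × M₂, (M₁ × N₂) ∪ (N₁ × M₂))` is an index pair for it, and the resulting pointed quotient
is pointed homeomorphic to the smash product `(M₁/N₁) ∧ (M₂/N₂)`. -/
theorem indexPair_prodFlow_smash
    {Γ₁ Γ₂ : Type*} [TopologicalSpace Γ₁] [LocallyCompactSpace Γ₁] [T2Space Γ₁]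
    [TopologicalSpace Γ₂] [LocallyCompactSpace Γ₂] [T2Space Γ₂]
    (φ₁ : Γ₁ × ℝ → Γ₁) (φ₂ : Γ₂ × ℝ → Γ₂) (hφ₁ : IsFlow φ₁) (hφ₂ : IsFlow φ₂)
    (S₁ : Set Γ₁) (S₂ : Set Γ₂)
    (hS₁ : IsIsolatedInvariantSet φ₁ S₁) (hS₂ : IsIsolatedInvariantSet φ₂ S₂)
    {M₁ N₁ : Set Γ₁} {M₂ N₂ : Set Γ₂}
    (h₁ : IsIndexPair φ₁ S₁ M₁ N₁) (h₂ : IsIndexPair φ₂ S₂ M₂ N₂)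
    (hN₁ : N₁.Nonempty) (hN₂ : N₂.Nonempty) :
    IsIsolatedInvariantSet (prodFlow φ₁ φ₂) (S₁ ×ˢ S₂) ∧
    IsIndexPair (prodFlow φ₁ φ₂) (S₁ ×ˢ S₂) (M₁ ×ˢ M₂) ((M₁ ×ˢ N₂) ∪ (N₁ ×ˢ M₂)) ∧
    (∀ (hsub : ((M₁ ×ˢ N₂) ∪ (N₁ ×ˢ M₂) : Set (Γ₁ × Γ₂)) ⊆ M₁ ×ˢ M₂)
       (hne : ((M₁ ×ˢ N₂) ∪ (N₁ ×ˢ M₂) : Set (Γ₁ × Γ₂)).Nonempty),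
      ∃ e : IndexQuot (M₁ ×ˢ M₂) ((M₁ ×ˢ N₂) ∪ (N₁ ×ˢ M₂)) ≃ₜ
          SmashQuot (IndexQuot.pt h₁.2.2.1 hN₁) (IndexQuot.pt h₂.2.2.1 hN₂),
        e (IndexQuot.pt hsub hne) =
          SmashQuot.pt (IndexQuot.pt h₁.2.2.1 hN₁) (IndexQuot.pt h₂.2.2.1 hN₂)) := by
  obtain ⟨U₁, hU₁⟩ := hS₁.2
  obtain ⟨U₂, hU₂⟩ := hS₂.2
  refine ⟨⟨hS₁.1.prod hS₂.1, U₁ ×ˢ U₂, isolating_prod hU₁ hU₂⟩, ?_, ?_⟩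
  · refine ⟨h₁.1.prod h₂.1, (h₁.1.prod h₂.2.1).union (h₁.2.1.prod h₂.1),
      union_subset (prod_mono subset_rfl h₂.2.2.1) (prod_mono h₁.2.2.1 subset_rfl),
      ?_, ?_, ?_⟩
    · rw [diff_prod_union, closure_prod_eq]
      exact isolating_prod h₁.2.2.2.1 h₂.2.2.2.1
    · rintro ⟨x₁, x₂⟩ hx t ht hst
      rcases hx with h | h
      · have h2 := h₂.2.2.2.2.1 x₂ h.2 t ht (fun s hs => (hst s hs).2)
        exact fun s hs => Or.inl ⟨(hst s hs).1, h2 s hs⟩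
      · have h1 := h₁.2.2.2.2.1 x₁ h.1 t ht (fun s hs => (hst s hs).1)
        exact fun s hs => Or.inr ⟨h1 s hs, (hst s hs).2⟩
    · exact exit_prod hφ₁ hφ₂ h₁.1 h₂.1 h₁.2.1.isClosed h₂.2.1.isClosed
        h₁.2.2.2.2.2 h₂.2.2.2.2.2
  · intro hsub hne
    exact smash_equiv h₁.1 h₂.1 h₁.2.1.isClosed h₂.2.1.isClosed
      h₁.2.2.1 h₂.2.2.1 hN₁ hN₂ hsub hne
end

section
/- Let E be a real Hilbert space and let F : E → ℝ be continuously Fréchet differentiable; let ∇F : E → E denote its gradient, characterized by ⟨∇F(x), v⟩ = F'(x)(v) for all x, v ∈ E. Let γ : ℝ → E be a differentiable curve satisfying γ'(t) = −∇F(γ(t)) for all t ∈ ℝ, and suppose the limits C₋ := lim_{t→−∞} γ(t) and C₊ := lim_{t→+∞} γ(t) exist in E. If F(C₋) = F(C₊), then γ is constant. -/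
/-!
Along a negative gradient trajectory `F ∘ γ` has derivative `-‖∇F(γ t)‖²`, so it is
nonincreasing. Being squeezed between its equal limits at `±∞`, it is constant; hence its
derivative vanishes, `∇F` is zero along `γ`, and so is `γ'`.
-/

open Filter
open scoped RealInnerProductSpace

theorem Antitone.eq_of_tendsto_atBot_of_tendsto_atTop {α β : Type*} [Lattice α] [Nonempty α]
    [PartialOrder β] [TopologicalSpace β] [OrderClosedTopology β] {f : α → β} {b : β}
    (hf : Antitone f) (hbot : Tendsto f atBot (nhds b)) (htop : Tendsto f atTop (nhds b))
    (a : α) : f a = b :=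
  le_antisymm (_root_.ge_of_tendsto hbot (eventually_atBot.2 ⟨a, fun _ h => hf h⟩))
    (_root_.le_of_tendsto htop (eventually_atTop.2 ⟨a, fun _ h => hf h⟩))

theorem HasFDerivAt.hasDerivAt_comp_neg_gradient {E : Type*} [NormedAddCommGroup E]
    [InnerProductSpace ℝ E] {F : E → ℝ} {F' : E →L[ℝ] ℝ} {g : E} {γ : ℝ → E} {t : ℝ}
    (hF : HasFDerivAt F F' (γ t)) (hg : ∀ v, ⟪g, v⟫ = F' v) (hγ : HasDerivAt γ (-g) t) :
    HasDerivAt (fun s => F (γ s)) (-‖g‖ ^ 2) t := by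
  have hslope : F' (-g) = -‖g‖ ^ 2 := by
    rw [← hg, inner_neg_right, real_inner_self_eq_norm_sq]
  exact hslope ▸ hF.comp_hasDerivAt t hγ

theorem gradient_trajectory_constant_of_limits_eq_general
    {E : Type*} [NormedAddCommGroup E] [InnerProductSpace ℝ E]
    (F : E → ℝ) (hF : ContDiff ℝ 1 F)
    (gradF : E → E) (hgrad : ∀ x v : E, ⟪gradF x, v⟫ = fderiv ℝ F x v)
    (γ : ℝ → E) (hγ : ∀ t : ℝ, HasDerivAt γ (-(gradF (γ t))) t)
    (Cm Cp : E)
    (hm : Tendsto γ atBot (nhds Cm))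
    (hp : Tendsto γ atTop (nhds Cp))
    (heq : F Cm = F Cp) :
    ∀ s t : ℝ, γ s = γ t := by
  have hdecay : ∀ t, HasDerivAt (fun s => F (γ s)) (-‖gradF (γ t)‖ ^ 2) t := fun t =>
    HasFDerivAt.hasDerivAt_comp_neg_gradient (hF.differentiable one_ne_zero _).hasFDerivAt
      (hgrad _) (hγ t)
  have hanti : Antitone fun t => F (γ t) :=
    antitone_of_hasDerivAt_nonpos hdecay fun t => neg_nonpos.2 (sq_nonneg _)
  have hlevel : ∀ t, F (γ t) = F Cp := hanti.eq_of_tendsto_atBot_of_tendsto_atTop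
    (heq ▸ (hF.continuous.tendsto Cm).comp hm) ((hF.continuous.tendsto Cp).comp hp)
  have hcritical : ∀ t, gradF (γ t) = 0 := fun t => by
    have hzero : HasDerivAt (fun s => F (γ s)) 0 t := by
      simpa only [hlevel] using hasDerivAt_const t (F Cp)
    simpa using (hzero.unique (hdecay t)).symm
  intro s t
  refine is_const_of_deriv_eq_zero (fun x => (hγ x).differentiableAt) (fun x => ?_) s t
  rw [(hγ x).deriv, hcritical x, neg_zero]

/-- **Rigidity of gradient trajectories**: a negative gradient trajectory of a continuously
Fréchet differentiable functional `F` on a real Hilbert space, whose limits at `±∞` exist and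
at which `F` takes equal values, must be constant. -/
theorem gradient_trajectory_constant_of_limits_eq
    {E : Type*} [NormedAddCommGroup E] [InnerProductSpace ℝ E] [CompleteSpace E]
    (F : E → ℝ) (hF : ContDiff ℝ 1 F)
    (gradF : E → E) (hgrad : ∀ x v : E, ⟪gradF x, v⟫ = fderiv ℝ F x v)
    (γ : ℝ → E) (hγ : ∀ t : ℝ, HasDerivAt γ (-(gradF (γ t))) t)
    (Cm Cp : E)
    (hm : Tendsto γ atBot (nhds Cm))
    (hp : Tendsto γ atTop (nhds Cp))
    (heq : F Cm = F Cp) :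
    ∀ s t : ℝ, γ s = γ t :=
  gradient_trajectory_constant_of_limits_eq_general F hF gradF hgrad γ hγ Cm Cp hm hp heq
end
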